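/- The quotient ring $\mathcal{R}_\Theta := \mathbb{F}_2[X_1,X_2]/(X_1^2X_2 + X_1X_2^2,\; X_1^2 + X_2^2 + X_1X_2)$ is a 6-dimensional vector space over the two-element field $\mathbb{F}_2$, with basis the residue classes of $1,\, X_1,\, X_2,\, X_1^2,\, X_1X_2,\, X_1^2X_2$. -/

import Mathlib

open MvPolynomial

noncomputable section

/-- The defining ideal of the mod-2 graph ring of the planar theta graph. -/
abbrev thetaIdealF : Ideal (MvPolynomial (Fin 2) (ZMod 2)) :=
  Ideal.span {X 0 ^ 2 * X 1 + X 0 * X 1 ^ 2, X 0 ^ 2 + X 1 ^ 2 + X 0 * X 1}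

/-- The graph ring `𝓡_Θ = 𝔽₂[X₁,X₂]/(X₁²X₂ + X₁X₂², X₁² + X₂² + X₁X₂)` of the
planar theta graph over the two-element field. -/
abbrev RThetaF := MvPolynomial (Fin 2) (ZMod 2) ⧸ thetaIdealF

/-!
The span of the six monomial classes contains `1` and is closed under multiplication by the
generators `x₀, x₁`, because `x₁² = x₀² + x₀x₁`, `x₀³ = 0` and `x₀x₁² = x₀²x₁` in characteristic
two; so they span. For independence, the matrices of multiplication by `x₀, x₁` in these
coordinates commute and satisfy the defining relations, so they give a representation of
`𝓡_Θ`; taking the first column (the image of `1`) is a linear map `𝓡_Θ → 𝔽₂⁶` sending the six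
classes to the standard basis.
-/

theorem Submodule.span_eq_top_of_mul_mem {R A : Type*} [CommSemiring R] [Semiring A]
    [Algebra R A] {s t : Set A} (hs : Algebra.adjoin R s = ⊤) (one_mem : 1 ∈ Submodule.span R t)
    (mul_mem : ∀ v ∈ t, ∀ a ∈ s, v * a ∈ Submodule.span R t) : Submodule.span R t = ⊤ := by
  set S := Submodule.span R t
  have mul_gen_mem (a : A) (ha : a ∈ s) : ∀ x ∈ S, x * a ∈ S :=
    Submodule.span_le (p := S.comap (LinearMap.mulRight R a)).2 fun v hv => mul_mem v hv a ha
  have mul_mem_S (y : A) : ∀ x ∈ S, x * y ∈ S := by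
    have hy : y ∈ Algebra.adjoin R s := hs ▸ Algebra.mem_top
    induction hy using Algebra.adjoin_induction with
    | mem a ha => exact mul_gen_mem a ha
    | algebraMap r =>
      intro x hx
      rw [← Algebra.commutes, ← Algebra.smul_def]
      exact S.smul_mem r hx
    | add y z _ _ hy hz => exact fun x hx => mul_add x y z ▸ add_mem (hy x hx) (hz x hx)
    | mul y z _ _ hy hz => exact fun x hx => mul_assoc x y z ▸ hz _ (hy x hx)
  exact eq_top_iff.2 fun y _ => one_mul y ▸ mul_mem_S y 1 one_mem

theorem Ideal.Quotient.adjoin_range_mk_X {σ R : Type*} [CommRing R]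
    (I : Ideal (MvPolynomial σ R)) :
    Algebra.adjoin R (Set.range fun n => Ideal.Quotient.mk I (X n)) = ⊤ := by
  have := Algebra.adjoin_image R (Ideal.Quotient.mkₐ R I) (Set.range X)
  rwa [adjoin_range_X, Algebra.map_top,
    (AlgHom.range_eq_top _).2 (Ideal.Quotient.mkₐ_surjective R I), ← Set.range_comp] at this

namespace RThetaF

def basisMonomial : Fin 6 → MvPolynomial (Fin 2) (ZMod 2) :=
  ![1, X 0, X 1, X 0 ^ 2, X 0 * X 1, X 0 ^ 2 * X 1]

/-- Column `i` of `mulTable n` holds the coordinates of `basisMonomial i * X n`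
with respect to `basisMonomial` in `RThetaF`. -/
def mulTable : Fin 2 → Matrix (Fin 6) (Fin 6) (ZMod 2) :=
  ![!![0,0,0,0,0,0; 1,0,0,0,0,0; 0,0,0,0,0,0; 0,1,0,0,0,0; 0,0,1,0,0,0; 0,0,0,0,1,0],
    !![0,0,0,0,0,0; 0,0,0,0,0,0; 1,0,0,0,0,0; 0,0,1,0,0,0; 0,1,1,0,0,0; 0,0,0,1,1,0]]

local notation "x₀" => Ideal.Quotient.mk thetaIdealF (X 0 : MvPolynomial (Fin 2) (ZMod 2))
local notation "x₁" => Ideal.Quotient.mk thetaIdealF (X 1 : MvPolynomial (Fin 2) (ZMod 2))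

theorem two_eq_zero : (2 : RThetaF) = 0 := by
  rw [← map_ofNat (algebraMap (ZMod 2) RThetaF), show (2 : ZMod 2) = 0 from rfl, map_zero]

theorem cubic_relation : x₀ ^ 2 * x₁ + x₀ * x₁ ^ 2 = 0 := by
  simp only [← map_pow, ← map_mul, ← map_add, Ideal.Quotient.eq_zero_iff_mem]
  exact Ideal.subset_span (Set.mem_insert _ _)

theorem quadratic_relation : x₀ ^ 2 + x₁ ^ 2 + x₀ * x₁ = 0 := by
  simp only [← map_pow, ← map_mul, ← map_add, Ideal.Quotient.eq_zero_iff_mem]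
  exact Ideal.subset_span (Set.mem_insert_of_mem _ rfl)

theorem x₁_sq : x₁ ^ 2 = x₀ ^ 2 + x₀ * x₁ := by
  linear_combination quadratic_relation - (x₀ ^ 2 + x₀ * x₁) * two_eq_zero

theorem x₀_cube : x₀ ^ 3 = 0 := by
  linear_combination x₀ * quadratic_relation - cubic_relation

theorem x₀_mul_x₁_sq : x₀ * x₁ ^ 2 = x₀ ^ 2 * x₁ := by
  linear_combination cubic_relation - x₀ ^ 2 * x₁ * two_eq_zero

theorem mk_basisMonomial_mul_X (n : Fin 2) (i : Fin 6) :
    Ideal.Quotient.mk thetaIdealF (basisMonomial i) * Ideal.Quotient.mk thetaIdealF (X n) =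
      ∑ j, mulTable n j i • Ideal.Quotient.mk thetaIdealF (basisMonomial j) := by
  fin_cases n <;> fin_cases i <;>
    simp only [basisMonomial, mulTable, Fin.sum_univ_six, Fin.isValue, Fin.zero_eta, Fin.mk_one,
      Fin.reduceFinMk, Matrix.of_apply, Matrix.cons_val', Matrix.cons_val, Matrix.cons_val_zero,
      Matrix.cons_val_one, Matrix.cons_val_fin_one, map_one, map_mul, map_pow, one_mul, zero_smul,
      one_smul, zero_add, add_zero]
  all_goals first
    | ring1
    | linear_combination x₀_cube
    | linear_combination x₁ * x₀_cube
    | linear_combination x₁_sq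
    | linear_combination x₀_mul_x₁_sq
    | linear_combination x₀ * x₀_mul_x₁_sq + x₁ * x₀_cube

theorem span_mk_basisMonomial :
    Submodule.span (ZMod 2) (Set.range (Ideal.Quotient.mk thetaIdealF ∘ basisMonomial)) = ⊤ := by
  refine Submodule.span_eq_top_of_mul_mem (Ideal.Quotient.adjoin_range_mk_X _)
    (Submodule.subset_span ⟨0, map_one _⟩) ?_
  rintro _ ⟨i, rfl⟩ _ ⟨n, rfl⟩
  rw [Function.comp_apply, mk_basisMonomial_mul_X]
  exact Submodule.sum_mem _ fun j _ => Submodule.smul_mem _ _ (Submodule.subset_span ⟨j, rfl⟩)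

theorem mulTable_mul_comm (m n : Fin 2) : mulTable m * mulTable n = mulTable n * mulTable m := by
  fin_cases m <;> fin_cases n <;> decide

abbrev tableAlgebra : Subalgebra (ZMod 2) (Matrix (Fin 6) (Fin 6) (ZMod 2)) :=
  Algebra.adjoin (ZMod 2) (Set.range mulTable)

instance : IsMulCommutative tableAlgebra :=
  Algebra.isMulCommutative_adjoin _ <| by
    rintro _ ⟨m, rfl⟩ _ ⟨n, rfl⟩
    exact mulTable_mul_comm m n

open scoped IsMulCommutative

def evalMulTable : MvPolynomial (Fin 2) (ZMod 2) →ₐ[ZMod 2] tableAlgebra :=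
  aeval fun n => ⟨mulTable n, Algebra.subset_adjoin ⟨n, rfl⟩⟩

theorem thetaIdealF_le_ker_evalMulTable : thetaIdealF ≤ RingHom.ker evalMulTable := by
  refine Ideal.span_le.2 ?_
  rintro _ (rfl | rfl) <;>
  · rw [SetLike.mem_coe, RingHom.mem_ker, ← Subtype.coe_inj]
    simp only [evalMulTable, map_add, map_mul, map_pow, aeval_X, AddMemClass.mk_add_mk,
      MulMemClass.mk_mul_mk, SubmonoidClass.mk_pow, ZeroMemClass.coe_zero]
    decide

def regularRep : RThetaF →ₐ[ZMod 2] tableAlgebra :=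
  Ideal.Quotient.liftₐ thetaIdealF evalMulTable fun _ ha => thetaIdealF_le_ker_evalMulTable ha

theorem regularRep_mk (p : MvPolynomial (Fin 2) (ZMod 2)) :
    regularRep (Ideal.Quotient.mk thetaIdealF p) = evalMulTable p :=
  Ideal.Quotient.lift_mk _ _ _

/-- The first column of `regularRep x`, i.e. the coordinates of `x * 1`. -/
def coords : RThetaF →ₗ[ZMod 2] Fin 6 → ZMod 2 where
  toFun x j := (regularRep x : Matrix (Fin 6) (Fin 6) (ZMod 2)) j 0
  map_add' _ _ := by ext; simp
  map_smul' _ _ := by ext; simp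

theorem coords_mk_basisMonomial (i : Fin 6) :
    coords (Ideal.Quotient.mk thetaIdealF (basisMonomial i)) = Pi.single i 1 := by
  ext j
  simp only [coords, LinearMap.coe_mk, AddHom.coe_mk, regularRep_mk]
  fin_cases i <;>
    simp only [basisMonomial, evalMulTable, Fin.isValue, Fin.zero_eta, Fin.mk_one, Fin.reduceFinMk,
      Matrix.cons_val, Matrix.cons_val_zero, Matrix.cons_val_one, map_one, map_mul, map_pow, aeval_X,
      OneMemClass.coe_one, MulMemClass.mk_mul_mk, SubmonoidClass.mk_pow] <;>
    revert j <;> decide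

theorem linearIndependent_mk_basisMonomial :
    LinearIndependent (ZMod 2) (Ideal.Quotient.mk thetaIdealF ∘ basisMonomial) := by
  refine LinearIndependent.of_comp coords ?_
  convert (Pi.basisFun (ZMod 2) (Fin 6)).linearIndependent
  ext i : 1
  simp [coords_mk_basisMonomial]

end RThetaF

/-- `𝓡_Θ` is a 6-dimensional `𝔽₂`-vector space, with basis the residue classes of
the monomials `1, X₁, X₂, X₁², X₁X₂, X₁²X₂`. -/
theorem RThetaF_dim_six :
    Module.finrank (ZMod 2) RThetaF = 6 ∧
    ∃ B : Module.Basis (Fin 6) (ZMod 2) RThetaF, ∀ i : Fin 6,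
      B i = Ideal.Quotient.mk thetaIdealF
        (![1, X 0, X 1, X 0 ^ 2, X 0 * X 1, X 0 ^ 2 * X 1] i) := by
  let B := Module.Basis.mk RThetaF.linearIndependent_mk_basisMonomial
    RThetaF.span_mk_basisMonomial.ge
  exact ⟨by rw [Module.finrank_eq_card_basis B, Fintype.card_fin], B, Module.Basis.mk_apply _ _⟩

end
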